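/- For all n ≥ 0, the number of permutations of [n] avoiding both generalized patterns 1-23 and 13-2 equals the n-th Motzkin number. -/

import Mathlib

/-!
The minimum of an avoider of `[n+1]` is one of its last two entries: followed by `b, c` it would
start a `1-23` if `b < c` and a `13-2` if `c < b`. If it is the last entry, deleting it leaves an
arbitrary avoider of `[n]`. Otherwise the permutation ends with `1 x`, and since `x` may not be the
`2` of a `13-2`, no entry below `x` is immediately followed by one above `x`: the permutation is
`β σ 1 x` with `β > x > σ`. No occurrence of either pattern can straddle these blocks, so `β`
and `σ` are arbitrary avoiders, of lengths `n + 1 - x` and `x - 2`. Counting both cases gives the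
Motzkin recursion.
-/

/-- The Motzkin numbers: `M 0 = 1` and
`M (n+1) = M n + Σ_{k=0}^{n-1} M k * M (n-1-k)`. -/
def motzkin : ℕ → ℕ
  | 0 => 1
  | n + 1 => motzkin n + ∑ k ∈ (Finset.range n).attach, motzkin k * motzkin (n - 1 - k)
decreasing_by
  · omega
  · have := Finset.mem_range.mp k.2; omega
  · omega

/-- `π` contains an occurrence of the generalized pattern `1-23`:
indices `i < j` with `j + 1 ≤ n` and `π i < π j < π (j+1)`. -/
def Occ123 {n : ℕ} (π : Equiv.Perm (Fin n)) : Prop :=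
  ∃ i j : Fin n, ∃ hj : (j : ℕ) + 1 < n,
    i < j ∧ π i < π j ∧ π j < π ⟨(j : ℕ) + 1, hj⟩

/-- `π` contains an occurrence of the generalized pattern `13-2`:
an index `i` with `i + 1 ≤ n` and `j > i + 1` such that `π i < π j < π (i+1)`. -/
def Occ132 {n : ℕ} (π : Equiv.Perm (Fin n)) : Prop :=
  ∃ i j : Fin n, ∃ hi : (i : ℕ) + 1 < n,
    (i : ℕ) + 1 < (j : ℕ) ∧ π i < π j ∧ π j < π ⟨(i : ℕ) + 1, hi⟩

namespace List

variable {α : Type*}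

section LT

variable [LT α]

/-- The patterns of `Occ123` and `Occ132` for words over any order, stated by splitting the word
rather than by positions (compare `occ123_iff_getElem`). -/
def Occ123 (l : List α) : Prop :=
  ∃ p b c r, l = p ++ b :: c :: r ∧ (∃ a ∈ p, a < b) ∧ b < c

def Occ132 (l : List α) : Prop :=
  ∃ p a c r, l = p ++ a :: c :: r ∧ ∃ b ∈ r, a < b ∧ b < c

def Avoids (l : List α) : Prop :=
  ¬ l.Occ123 ∧ ¬ l.Occ132

theorem avoids_nil : ([] : List α).Avoids := by
  constructor <;> rintro ⟨p, _, _, _, h, -⟩ <;> simp at h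

theorem avoids_singleton (a : α) : [a].Avoids := by
  constructor <;>
  · rintro ⟨p, _, _, r, h, -⟩
    have := congrArg length h
    simp only [length_append, length_cons, length_nil] at this
    omega

theorem Occ123.of_isInfix {l₁ l₂ : List α} (h : l₁ <:+: l₂) : l₁.Occ123 → l₂.Occ123 := by
  obtain ⟨u, v, rfl⟩ := h
  rintro ⟨p, b, c, r, rfl, ⟨a, ha, hab⟩, hbc⟩
  exact ⟨u ++ p, b, c, r ++ v, by simp, ⟨a, mem_append_right u ha, hab⟩, hbc⟩

theorem Occ132.of_isInfix {l₁ l₂ : List α} (h : l₁ <:+: l₂) : l₁.Occ132 → l₂.Occ132 := by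
  obtain ⟨u, v, rfl⟩ := h
  rintro ⟨p, a, c, r, rfl, b, hb, hab, hbc⟩
  exact ⟨u ++ p, a, c, r ++ v, by simp, b, mem_append_left v hb, hab, hbc⟩

theorem Avoids.of_isInfix {l₁ l₂ : List α} (h : l₁ <:+: l₂) (h₂ : l₂.Avoids) : l₁.Avoids :=
  ⟨mt (Occ123.of_isInfix h) h₂.1, mt (Occ132.of_isInfix h) h₂.2⟩

theorem occ123_iff_getElem {l : List α} :
    l.Occ123 ↔ ∃ i j, ∃ hj : j + 1 < l.length, ∃ _ : i < j, l[i] < l[j] ∧ l[j] < l[j + 1] := by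
  constructor
  · rintro ⟨p, b, c, r, rfl, ⟨a, ha, hab⟩, hbc⟩
    obtain ⟨i, hi, rfl⟩ := getElem_of_mem ha
    refine ⟨i, p.length, by simp, hi, ?_, ?_⟩ <;> simp [getElem_append_left hi, *]
  · rintro ⟨i, j, hj, hij, hab, hbc⟩
    refine ⟨l.take j, l[j], l[j + 1], l.drop (j + 1 + 1), ?_, ⟨l[i], ?_, hab⟩, hbc⟩
    · rw [← drop_eq_getElem_cons, ← drop_eq_getElem_cons, take_append_drop]
    · exact mem_take_iff_getElem.2 ⟨i, by omega, rfl⟩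

theorem occ132_iff_getElem {l : List α} :
    l.Occ132 ↔ ∃ i j, ∃ hi : i + 1 < l.length, ∃ hj : j < l.length,
      i + 1 < j ∧ l[i] < l[j] ∧ l[j] < l[i + 1] := by
  constructor
  · rintro ⟨p, a, c, r, rfl, b, hb, hab, hbc⟩
    obtain ⟨t, ht, rfl⟩ := getElem_of_mem hb
    refine ⟨p.length, p.length + (t + 1 + 1), by simp, by simp; omega, by omega, ?_, ?_⟩ <;>
      simp [*]
  · rintro ⟨i, j, hi, hj, hij, hab, hbc⟩
    refine ⟨l.take i, l[i], l[i + 1], l.drop (i + 1 + 1), ?_, l[j], ?_, hab, hbc⟩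
    · rw [← drop_eq_getElem_cons, ← drop_eq_getElem_cons, take_append_drop]
    · exact mem_drop_iff_getElem.2 ⟨j - (i + 1 + 1), by omega, by congr 1; omega⟩

theorem occ123_ofFn_iff {n : ℕ} {f : Fin n → α} :
    (ofFn f).Occ123 ↔ ∃ i j : Fin n, ∃ hj : (j : ℕ) + 1 < n,
      i < j ∧ f i < f j ∧ f j < f ⟨(j : ℕ) + 1, hj⟩ := by
  simp only [occ123_iff_getElem, length_ofFn, List.getElem_ofFn]
  constructor
  · rintro ⟨i, j, hj, hij, h⟩
    exact ⟨⟨i, by omega⟩, ⟨j, by omega⟩, hj, hij, h⟩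
  · rintro ⟨i, j, hj, hij, h⟩
    exact ⟨i, j, hj, hij, h⟩

theorem occ132_ofFn_iff {n : ℕ} {f : Fin n → α} :
    (ofFn f).Occ132 ↔ ∃ i j : Fin n, ∃ hi : (i : ℕ) + 1 < n,
      (i : ℕ) + 1 < (j : ℕ) ∧ f i < f j ∧ f j < f ⟨(i : ℕ) + 1, hi⟩ := by
  simp only [occ132_iff_getElem, length_ofFn, List.getElem_ofFn]
  constructor
  · rintro ⟨i, j, hi, hj, hij, h⟩
    exact ⟨⟨i, by omega⟩, ⟨j, hj⟩, hi, hij, h⟩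
  · rintro ⟨i, j, hi, hij, h⟩
    exact ⟨i, j, hi, j.2, hij, h⟩

theorem occ123_append_singleton {l : List α} {x : α} (h : (l ++ [x]).Occ123) :
    l.Occ123 ∨ ∃ p b, l = p ++ [b] ∧ (∃ a ∈ p, a < b) ∧ b < x := by
  obtain ⟨p, b, c, r, hl, hab, hbc⟩ := h
  rcases eq_nil_or_concat r with rfl | ⟨r, y, rfl⟩
  · have hl' : l ++ [x] = p ++ [b] ++ [c] := by simpa using hl
    obtain ⟨rfl, hx⟩ := append_inj' hl' rfl
    obtain rfl : x = c := by simpa using hx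
    exact Or.inr ⟨p, b, rfl, hab, hbc⟩
  · have hl' : l ++ [x] = p ++ b :: c :: r ++ [y] := by simpa using hl
    obtain ⟨rfl, -⟩ := append_inj' hl' rfl
    exact Or.inl ⟨p, b, c, r, rfl, hab, hbc⟩

theorem occ132_append_singleton {l : List α} {x : α} :
    (l ++ [x]).Occ132 ↔ l.Occ132 ∨ ∃ a c, [a, c] <:+: l ∧ a < x ∧ x < c := by
  constructor
  · rintro ⟨p, a, c, r, hl, b, hb, hab, hbc⟩
    rcases eq_nil_or_concat r with rfl | ⟨r, y, rfl⟩
    · simp at hb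
    have hl' : l ++ [x] = p ++ a :: c :: r ++ [y] := by simpa using hl
    obtain ⟨rfl, hx⟩ := append_inj' hl' rfl
    obtain rfl : x = y := by simpa using hx
    rcases (by simpa using hb : b ∈ r ∨ b = x) with hb | rfl
    · exact Or.inl ⟨p, a, c, r, rfl, b, hb, hab, hbc⟩
    · exact Or.inr ⟨a, c, ⟨p, r, by simp⟩, hab, hbc⟩
  · rintro (h | ⟨a, c, ⟨u, v, rfl⟩, hax, hxc⟩)
    · exact h.of_isInfix (prefix_append l [x]).isInfix
    · exact ⟨u, a, c, v ++ [x], by simp, x, by simp, hax, hxc⟩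

end LT

section Preorder

variable [Preorder α]

theorem occ123_append_of_forall_lt {l₁ l₂ : List α} (h : ∀ a ∈ l₁, ∀ b ∈ l₂, b < a)
    (h₁₂ : (l₁ ++ l₂).Occ123) : l₁.Occ123 ∨ l₂.Occ123 := by
  obtain ⟨p, b, c, r, hl, ⟨a, ha, hab⟩, hbc⟩ := h₁₂
  rcases append_eq_append_iff.1 hl with ⟨as, rfl, rfl⟩ | ⟨bs, rfl, hbs⟩
  · rcases mem_append.1 ha with ha | ha
    · exact absurd (h a ha b (by simp)) hab.asymm
    · exact Or.inr ⟨as, b, c, r, rfl, ⟨a, ha, hab⟩, hbc⟩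
  · obtain _ | ⟨b', _ | ⟨c', bs⟩⟩ := bs
    · exact absurd (h a (by simp [ha]) b (by rw [nil_append] at hbs; simp [← hbs])) hab.asymm
    · simp only [cons_append, nil_append, cons.injEq] at hbs
      obtain ⟨rfl, rfl⟩ := hbs
      exact absurd (h b (by simp) c (by simp)) hbc.asymm
    · simp only [cons_append, cons.injEq] at hbs
      obtain ⟨rfl, rfl, rfl⟩ := hbs
      exact Or.inl ⟨p, b, c, bs, rfl, ⟨a, ha, hab⟩, hbc⟩

theorem occ132_append_of_forall_lt {l₁ l₂ : List α} (h : ∀ a ∈ l₁, ∀ b ∈ l₂, b < a)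
    (h₁₂ : (l₁ ++ l₂).Occ132) : l₁.Occ132 ∨ l₂.Occ132 := by
  obtain ⟨p, a, c, r, hl, b, hb, hab, hbc⟩ := h₁₂
  rcases append_eq_append_iff.1 hl with ⟨as, rfl, rfl⟩ | ⟨bs, rfl, hbs⟩
  · exact Or.inr ⟨as, a, c, r, rfl, b, hb, hab, hbc⟩
  · obtain _ | ⟨a', _ | ⟨c', bs⟩⟩ := bs
    · exact Or.inr ⟨[], a, c, r, by simpa using hbs.symm, b, hb, hab, hbc⟩
    · simp only [cons_append, nil_append, cons.injEq] at hbs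
      obtain ⟨rfl, rfl⟩ := hbs
      exact absurd (h a (by simp) c (by simp)) (hab.trans hbc).asymm
    · simp only [cons_append, cons.injEq] at hbs
      obtain ⟨rfl, rfl, rfl⟩ := hbs
      rcases mem_append.1 hb with hb | hb
      · exact Or.inl ⟨p, a, c, bs, rfl, b, hb, hab, hbc⟩
      · exact absurd (h a (by simp) b hb) hab.asymm

theorem avoids_append_of_forall_lt {l₁ l₂ : List α} (h : ∀ a ∈ l₁, ∀ b ∈ l₂, b < a) :
    (l₁ ++ l₂).Avoids ↔ l₁.Avoids ∧ l₂.Avoids := by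
  refine ⟨fun hl => ⟨hl.of_isInfix (prefix_append _ _).isInfix,
    hl.of_isInfix (suffix_append _ _).isInfix⟩, fun ⟨h₁, h₂⟩ => ⟨?_, ?_⟩⟩
  · exact fun ho => (occ123_append_of_forall_lt h ho).elim h₁.1 h₂.1
  · exact fun ho => (occ132_append_of_forall_lt h ho).elim h₁.2 h₂.2

theorem avoids_append_pair {l : List α} {m x : α} (hm : ∀ a ∈ l, m < a) (hx : ∀ a ∈ l, a < x)
    (hmx : m < x) : (l ++ [m, x]).Avoids ↔ l.Avoids := by
  refine ⟨fun h => h.of_isInfix (prefix_append _ _).isInfix, fun h => ?_⟩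
  have hlm : (l ++ [m]).Avoids :=
    (avoids_append_of_forall_lt fun a ha b hb => by simp_all).2 ⟨h, avoids_singleton m⟩
  rw [show l ++ [m, x] = l ++ [m] ++ [x] by simp]
  constructor
  · intro ho
    rcases occ123_append_singleton ho with ho | ⟨p, b, hp, ⟨a, ha, hab⟩, -⟩
    · exact hlm.1 ho
    · obtain ⟨rfl, hb⟩ := append_inj' hp rfl
      obtain rfl : m = b := by simpa using hb
      exact (hm a ha).asymm hab
  · intro ho
    rcases occ132_append_singleton.1 ho with ho | ⟨a, c, hac, -, hxc⟩
    · exact hlm.2 ho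
    · rcases mem_append.1 (hac.subset (by simp : c ∈ [a, c])) with hc | hc
      · exact (hx c hc).asymm hxc
      · rw [mem_singleton.1 hc] at hxc
        exact hmx.asymm hxc

theorem avoids_append_append_pair {B S : List α} {m x : α} (hB : ∀ v ∈ B, x < v)
    (hm : ∀ v ∈ S, m < v) (hx : ∀ v ∈ S, v < x) (hmx : m < x) :
    (B ++ S ++ [m, x]).Avoids ↔ B.Avoids ∧ S.Avoids := by
  rw [append_assoc, avoids_append_of_forall_lt, avoids_append_pair hm hx hmx]
  intro a ha v hv
  rcases mem_append.1 hv with hv | hv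
  · exact (hx v hv).trans (hB a ha)
  · simp only [mem_cons, not_mem_nil, or_false] at hv
    rcases hv with rfl | rfl
    exacts [hmx.trans (hB a ha), hB a ha]

end Preorder

section LinearOrder

variable [LinearOrder α]

theorem occ123_map {β : Type*} [Preorder β] {f : α → β} (hf : StrictMono f) {l : List α} :
    (l.map f).Occ123 ↔ l.Occ123 := by
  constructor
  · rintro ⟨p, b, c, r, h, ⟨a, ha, hab⟩, hbc⟩
    obtain ⟨p, t, rfl, rfl, ht⟩ := map_eq_append_iff.1 h
    obtain ⟨b, t', rfl, rfl, ht'⟩ := map_eq_cons_iff.1 ht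
    obtain ⟨c, r, rfl, rfl, rfl⟩ := map_eq_cons_iff.1 ht'
    obtain ⟨a, ha', rfl⟩ := mem_map.1 ha
    exact ⟨p, b, c, r, rfl, ⟨a, ha', hf.lt_iff_lt.1 hab⟩, hf.lt_iff_lt.1 hbc⟩
  · rintro ⟨p, b, c, r, rfl, ⟨a, ha, hab⟩, hbc⟩
    exact ⟨p.map f, f b, f c, r.map f, by simp, ⟨f a, mem_map_of_mem ha, hf hab⟩, hf hbc⟩

theorem occ132_map {β : Type*} [Preorder β] {f : α → β} (hf : StrictMono f) {l : List α} :
    (l.map f).Occ132 ↔ l.Occ132 := by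
  constructor
  · rintro ⟨p, a, c, r, h, b, hb, hab, hbc⟩
    obtain ⟨p, t, rfl, rfl, ht⟩ := map_eq_append_iff.1 h
    obtain ⟨a, t', rfl, rfl, ht'⟩ := map_eq_cons_iff.1 ht
    obtain ⟨c, r, rfl, rfl, rfl⟩ := map_eq_cons_iff.1 ht'
    obtain ⟨b, hb', rfl⟩ := mem_map.1 hb
    exact ⟨p, a, c, r, rfl, b, hb', hf.lt_iff_lt.1 hab, hf.lt_iff_lt.1 hbc⟩
  · rintro ⟨p, a, c, r, rfl, b, hb, hab, hbc⟩
    exact ⟨p.map f, f a, f c, r.map f, by simp, f b, mem_map_of_mem hb, hf hab, hf hbc⟩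

theorem avoids_map {β : Type*} [Preorder β] {f : α → β} (hf : StrictMono f) {l : List α} :
    (l.map f).Avoids ↔ l.Avoids := by
  rw [Avoids, Avoids, occ123_map hf, occ132_map hf]

theorem not_avoids_append_min_cons_cons {u r : List α} {m b c : α} (hb : m < b) (hc : m < c)
    (hbc : b ≠ c) : ¬ (u ++ m :: b :: c :: r).Avoids := by
  rintro ⟨h123, h132⟩
  rcases hbc.lt_or_gt with hbc | hcb
  · exact h123 ⟨u ++ [m], b, c, r, by simp, ⟨m, by simp, hb⟩, hbc⟩
  · exact h132 ⟨u, m, b, c :: r, rfl, c, mem_cons_self, hc, hcb⟩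

theorem Avoids.eq_append_min {l : List α} {m : α} (hl : l.Avoids) (hnd : l.Nodup) (hm : m ∈ l)
    (hmin : ∀ a ∈ l, m ≤ a) : (∃ u, l = u ++ [m]) ∨ ∃ u x, l = u ++ [m, x] := by
  obtain ⟨u, t, rfl⟩ := append_of_mem hm
  obtain _ | ⟨b, _ | ⟨c, r⟩⟩ := t
  · exact Or.inl ⟨u, rfl⟩
  · exact Or.inr ⟨u, b, rfl⟩
  · obtain ⟨hmb, hmc, hbc⟩ : m ≠ b ∧ m ≠ c ∧ b ≠ c := by grind [nodup_append, nodup_cons]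
    exact absurd hl (not_avoids_append_min_cons_cons
      ((hmin b (by simp)).lt_of_ne hmb) ((hmin c (by simp)).lt_of_ne hmc) hbc)

theorem exists_eq_append_of_no_ascent_across {x : α} :
    ∀ {l : List α}, x ∉ l → (∀ a c, [a, c] <:+: l → a < x → ¬ x < c) →
      ∃ B S, l = B ++ S ∧ (∀ v ∈ B, x < v) ∧ ∀ v ∈ S, v < x
  | [], _, _ => ⟨[], [], rfl, by simp, by simp⟩
  | a :: t, hx, h => by
    obtain ⟨B, S, rfl, hB, hS⟩ :=
      exists_eq_append_of_no_ascent_across (mt (mem_cons_of_mem a) hx)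
        fun a c hac => h a c (infix_cons hac)
    rcases (Ne.symm (ne_of_not_mem_cons hx)).lt_or_gt with hax | hxa
    · obtain _ | ⟨b, B⟩ := B
      · exact ⟨[], a :: S, rfl, by simp, forall_mem_cons.2 ⟨hax, hS⟩⟩
      · exact absurd (hB b mem_cons_self) (h a b ⟨[], B ++ S, rfl⟩ hax)
    · exact ⟨a :: B, S, rfl, forall_mem_cons.2 ⟨hxa, hB⟩, hS⟩

end LinearOrder

theorem Perm.of_append_of_forall {B S B' S' : List α} (p : α → Bool)
    (h : B ++ S ~ B' ++ S') (hB : ∀ v ∈ B, p v) (hB' : ∀ v ∈ B', p v)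
    (hS : ∀ v ∈ S, ¬ p v) (hS' : ∀ v ∈ S', ¬ p v) : B ~ B' := by
  have := h.filter p
  rwa [filter_append, filter_append, filter_eq_self.2 hB, filter_eq_self.2 hB',
    filter_eq_nil_iff.2 hS, filter_eq_nil_iff.2 hS', append_nil, append_nil] at this

theorem Perm.exists_eq_map_add {l l' : List ℕ} {c : ℕ} (h : l ~ l'.map (· + c)) :
    ∃ l₀, l₀ ~ l' ∧ l = l₀.map (· + c) := by
  refine ⟨l.map (· - c), by simpa [Function.comp_def] using h.map (· - c), ?_⟩
  rw [map_map, eq_comm, map_congr_left fun v hv => ?_, map_id]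
  obtain ⟨w, -, rfl⟩ := mem_map.1 (h.subset hv)
  simp

theorem map_add_range (c m : ℕ) : (range m).map (· + c) = range' c m := by
  simp [range'_eq_map_range, add_comm]

end List

open List

theorem map_add_one_append_zero_perm {n : ℕ} {a : List ℕ} (ha : a ~ range n) :
    a.map (· + 1) ++ [0] ~ range (n + 1) := by
  refine ((ha.map _).append_right [0]).trans ?_
  rw [range_succ_eq_map]
  exact perm_append_singleton _ _

/-- The word `β σ 1 x` of the header, on the values `0, …, n`, with `x = k + 1`. -/
def glue (k : ℕ) (s b : List ℕ) : List ℕ :=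
  b.map (· + (k + 2)) ++ s.map (· + 1) ++ [0, k + 1]

theorem glue_perm {n k : ℕ} (hk : k < n) {s b : List ℕ} (hs : s ~ range k)
    (hb : b ~ range (n - 1 - k)) : glue k s b ~ range (n + 1) := by
  refine (((hb.map _).append (hs.map _)).append_right _).trans ?_
  obtain ⟨m, rfl⟩ : ∃ m, n = k + 1 + m := ⟨n - 1 - k, by omega⟩
  have hrange : range (k + 1 + m + 1) = [0] ++ range' 1 k ++ [k + 1] ++ range' (k + 2) m := by
    rw [range_eq_range', show k + 1 + m + 1 = 1 + k + 1 + m by omega, ← range'_append,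
      ← range'_append, ← range'_append]
    simp only [range'_one, Nat.one_mul, Nat.zero_add]
    rw [show 1 + k + 1 = k + 2 by omega, Nat.add_comm 1 k]
  rw [map_add_range, map_add_range, show k + 1 + m - 1 - k = m by omega, hrange, append_assoc]
  refine perm_append_comm.trans ?_
  simp

theorem avoids_map_add_one_append_zero {a : List ℕ} :
    (a.map (· + 1) ++ [0]).Avoids ↔ a.Avoids := by
  rw [avoids_append_of_forall_lt (by simp), avoids_map fun _ _ h => by omega]
  simp [avoids_singleton]

theorem avoids_glue {k : ℕ} {s b : List ℕ} (hs : ∀ v ∈ s, v < k) :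
    (glue k s b).Avoids ↔ s.Avoids ∧ b.Avoids := by
  rw [glue, avoids_append_append_pair (by simp; omega) (by simp) (by simpa using hs) (by simp),
    avoids_map fun _ _ h => by omega, avoids_map fun _ _ h => by omega, and_comm]

theorem exists_eq_glue {n k : ℕ} {B S : List ℕ} (hk : k < n)
    (hl : B ++ S ++ [0, k + 1] ~ range (n + 1)) (hB : ∀ v ∈ B, k + 1 < v)
    (hS : ∀ v ∈ S, v < k + 1) :
    ∃ s b, s ~ range k ∧ b ~ range (n - 1 - k) ∧ B ++ S ++ [0, k + 1] = glue k s b := by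
  -- compare with `glue k (range k) (range (n - 1 - k))` and separate the blocks at `k + 1`
  have hBS := (perm_append_right_iff [0, k + 1]).1
    (hl.trans (glue_perm hk (Perm.refl _) (Perm.refl _)).symm)
  have hB' := hBS.of_append_of_forall (k + 1 < ·) (by simpa using hB) (by simp; omega)
    (by simpa using fun v hv => (hS v hv).le) (by simp; omega)
  have hS' := (perm_append_left_iff _).1 ((hB'.append_right S).symm.trans hBS)
  obtain ⟨b, hb, rfl⟩ := hB'.exists_eq_map_add
  obtain ⟨s, hs, rfl⟩ := hS'.exists_eq_map_add
  exact ⟨s, b, hs, hb, rfl⟩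

theorem List.Avoids.eq_map_add_one_append_zero_or_eq_glue {n : ℕ} {l : List ℕ}
    (hl : l ~ range (n + 1)) (hav : l.Avoids) :
    (∃ a, a ~ range n ∧ a.Avoids ∧ l = a.map (· + 1) ++ [0]) ∨
      ∃ k < n, ∃ s b, s ~ range k ∧ b ~ range (n - 1 - k) ∧ s.Avoids ∧ b.Avoids ∧
        l = glue k s b := by
  have hnd : l.Nodup := hl.nodup_iff.2 nodup_range
  rcases hav.eq_append_min hnd (hl.mem_iff.2 (mem_range.2 n.succ_pos))
    fun _ _ => Nat.zero_le _ with ⟨u, rfl⟩ | ⟨u, x, rfl⟩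
  · obtain ⟨a, ha, rfl⟩ := ((perm_append_right_iff [0]).1
      (hl.trans (map_add_one_append_zero_perm (Perm.refl (range n))).symm)).exists_eq_map_add
    exact Or.inl ⟨a, ha, avoids_map_add_one_append_zero.1 hav, rfl⟩
  have hx : x ∉ u ∧ x ≠ 0 := by grind [nodup_append]
  have hxn : x < n + 1 := mem_range.1 (hl.subset (by simp))
  obtain ⟨B, S, rfl, hB, hS⟩ := exists_eq_append_of_no_ascent_across hx.1 fun a c hac hax hxc =>
    hav.2 <| by
      rw [show u ++ [0, x] = u ++ [0] ++ [x] by simp]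
      exact occ132_append_singleton.2
        (Or.inr ⟨a, c, hac.trans (prefix_append u [0]).isInfix, hax, hxc⟩)
  obtain ⟨k, rfl⟩ := Nat.exists_eq_add_one_of_ne_zero hx.2
  have hk : k < n := by omega
  obtain ⟨s, b, hs, hb, hglue⟩ := exists_eq_glue hk hl hB hS
  rw [hglue] at hav
  obtain ⟨hsav, hbav⟩ := (avoids_glue fun v hv => mem_range.1 (hs.subset hv)).1 hav
  exact Or.inr ⟨k, hk, s, b, hs, hb, hsav, hbav, hglue⟩

def Avoider (n : ℕ) : Type :=
  {l : List ℕ // l ~ range n ∧ l.Avoids}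

def Avoider.assemble (n : ℕ) :
    Avoider n ⊕ (Σ k : Fin n, Avoider k × Avoider (n - 1 - k)) → Avoider (n + 1)
  | .inl a => ⟨a.1.map (· + 1) ++ [0], map_add_one_append_zero_perm a.2.1,
      avoids_map_add_one_append_zero.2 a.2.2⟩
  | .inr ⟨k, s, b⟩ => ⟨glue k s.1 b.1, glue_perm k.2 s.2.1 b.2.1,
      (avoids_glue fun _ hv => mem_range.1 (s.2.1.subset hv)).2 ⟨s.2.2, b.2.2⟩⟩

theorem Avoider.assemble_injective (n : ℕ) : Function.Injective (assemble n) := by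
  rintro (a | ⟨k, s, b⟩) (a' | ⟨k', s', b'⟩) h <;>
    have h := congrArg Subtype.val h <;> simp only [assemble] at h
  · obtain rfl : a = a' :=
      Subtype.ext (map_injective_iff.2 (add_left_injective 1) (append_cancel_right h))
    rfl
  · simpa [glue] using congrArg getLast? h
  · simpa [glue] using congrArg getLast? h
  · obtain ⟨h, hk⟩ := append_inj' h rfl
    simp only [cons.injEq, add_left_inj, and_true, true_and] at hk
    obtain rfl : k = k' := Fin.ext hk
    obtain ⟨hb, hs⟩ := append_inj h (by simp [b.2.1.length_eq, b'.2.1.length_eq])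
    obtain rfl : b = b' := Subtype.ext (map_injective_iff.2 (add_left_injective _) hb)
    obtain rfl : s = s' := Subtype.ext (map_injective_iff.2 (add_left_injective _) hs)
    rfl

theorem Avoider.assemble_surjective (n : ℕ) : Function.Surjective (assemble n) := by
  rintro ⟨l, hl, hav⟩
  rcases hav.eq_map_add_one_append_zero_or_eq_glue hl with
    ⟨a, ha, haav, rfl⟩ | ⟨k, hk, s, b, hs, hb, hsav, hbav, rfl⟩
  · exact ⟨.inl ⟨a, ha, haav⟩, rfl⟩
  · exact ⟨.inr ⟨⟨k, hk⟩, ⟨s, hs, hsav⟩, ⟨b, hb, hbav⟩⟩, rfl⟩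

def Avoider.ofPerm (n : ℕ) : {π : Equiv.Perm (Fin n) // ¬ Occ123 π ∧ ¬ Occ132 π} → Avoider n :=
  fun π => ⟨(ofFn π.1).map Fin.val,
    by simpa [ofFn_id, map_coe_finRange_eq_range] using
      (Equiv.Perm.ofFn_comp_perm π.1 id).map Fin.val,
    (avoids_map Fin.val_strictMono).2 ⟨occ123_ofFn_iff.not.2 π.2.1, occ132_ofFn_iff.not.2 π.2.2⟩⟩

theorem Avoider.ofPerm_bijective (n : ℕ) : Function.Bijective (ofPerm n) := by
  refine ⟨fun π σ h => ?_, fun ⟨l, hl, hav⟩ => ?_⟩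
  · have h := ofFn_injective (map_injective_iff.2 Fin.val_injective (congrArg Subtype.val h))
    exact Subtype.ext (Equiv.ext (congrFun h))
  · have hlen : l.length = n := hl.length_eq.trans length_range
    let g : Fin n → Fin n := fun i => ⟨l[i], mem_range.1 (hl.subset (getElem_mem _))⟩
    have hg : Function.Injective g := fun i j hij =>
      Fin.ext ((hl.nodup_iff.2 nodup_range).getElem_inj_iff.1 (Fin.val_eq_of_eq hij))
    let π := Equiv.ofBijective g (Finite.injective_iff_bijective.1 hg)
    have hπl : (ofFn π).map Fin.val = l := ext_getElem (by simp [hlen]) fun i _ _ => by simp [π, g]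
    obtain ⟨h123, h132⟩ := (avoids_map Fin.val_strictMono).1 (hπl ▸ hav)
    exact ⟨⟨π, occ123_ofFn_iff.not.1 h123, occ132_ofFn_iff.not.1 h132⟩, Subtype.ext hπl⟩

instance (n : ℕ) : Finite (Avoider n) :=
  Finite.of_surjective _ (Avoider.ofPerm_bijective n).2

theorem Avoider.card_zero : Nat.card (Avoider 0) = 1 :=
  Nat.card_eq_one_iff_unique.2
    ⟨⟨fun a b => Subtype.ext ((perm_nil.1 a.2.1).trans (perm_nil.1 b.2.1).symm)⟩,
      ⟨⟨[], Perm.refl _, avoids_nil⟩⟩⟩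

theorem Avoider.card_succ (n : ℕ) : Nat.card (Avoider (n + 1)) =
    Nat.card (Avoider n) + ∑ k : Fin n, Nat.card (Avoider k) * Nat.card (Avoider (n - 1 - k)) := by
  rw [← Nat.card_eq_of_bijective _ ⟨assemble_injective n, assemble_surjective n⟩, Nat.card_sum,
    Nat.card_sigma]
  simp only [Nat.card_prod]

theorem motzkin_succ (n : ℕ) :
    motzkin (n + 1) = motzkin n + ∑ k ∈ Finset.range n, motzkin k * motzkin (n - 1 - k) := by
  rw [motzkin, Finset.sum_attach (Finset.range n) fun k => motzkin k * motzkin (n - 1 - k)]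

theorem Avoider.card (n : ℕ) : Nat.card (Avoider n) = motzkin n := by
  induction n using Nat.strong_induction_on with
  | _ n ih =>
    obtain _ | n := n
    · rw [card_zero, motzkin]
    · rw [card_succ, motzkin_succ, Finset.sum_range, ih n n.lt_succ_self]
      congr 1
      exact Finset.sum_congr rfl fun k _ => by rw [ih k (by omega), ih (n - 1 - k) (by omega)]

/-- For all `n ≥ 0`, the number of permutations of `[n]` avoiding both
generalized patterns `1-23` and `13-2` equals the `n`-th Motzkin number. -/
theorem count_avoiding_1_23_and_13_2_eq_motzkin (n : ℕ) :
    Nat.card {π : Equiv.Perm (Fin n) // ¬ Occ123 π ∧ ¬ Occ132 π} = motzkin n := by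
  rw [Nat.card_eq_of_bijective _ (Avoider.ofPerm_bijective n), Avoider.card]
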